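/- arXiv:2507.13329 — 5 statements merged into one kernel-verified Lean document; each statement's English description precedes it below -/
import Mathlib

section
/- Let G be a bipartite graph with parts of size at least k each (k ≥ 3), and suppose G contains no path on 2k vertices. If G is connected, then the minimum degree of G is at most k−1. -/
/-!
Take a path `v₀ v₁ … v_m` in `G` that cannot be extended to a path on `m + 2` vertices. Every
neighbour of the endpoint `v₀` then lies on the path, and by bipartiteness only at an odd
position. Since there is no path on `2k` vertices, `m + 1 < 2k`, so there are at most `k - 1`
odd positions.
-/

/-- `G` contains a path on `m` vertices (as a subgraph). -/
def HasPathOn {V : Type*} (G : SimpleGraph V) (m : ℕ) : Prop :=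
  ∃ f : Fin m → V, Function.Injective f ∧
    ∀ (i : ℕ) (h : i + 1 < m), G.Adj (f ⟨i, Nat.lt_of_succ_lt h⟩) (f ⟨i + 1, h⟩)

open Finset

namespace HasPathOn

variable {V : Type*} {G : SimpleGraph V}

lemma zero : HasPathOn G 0 :=
  ⟨finZeroElim, fun i => i.elim0, fun _ h => absurd h (Nat.not_lt_zero _)⟩

lemma one [Nonempty V] : HasPathOn G 1 :=
  ⟨fun _ => Classical.arbitrary V, fun _ _ _ => Subsingleton.elim _ _,
    fun _ h => absurd h (by omega)⟩

lemma mono {m n : ℕ} (h : HasPathOn G m) (hnm : n ≤ m) : HasPathOn G n := by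
  obtain ⟨f, hinj, hadj⟩ := h
  exact ⟨f ∘ Fin.castLE hnm, hinj.comp (Fin.castLE_injective hnm),
    fun i h => hadj i (h.trans_le hnm)⟩

lemma le_card [Fintype V] {m : ℕ} (h : HasPathOn G m) : m ≤ Fintype.card V := by
  obtain ⟨f, hinj, -⟩ := h
  simpa using Fintype.card_le_of_injective f hinj

lemma exists_maximal [Fintype V] [Nonempty V] :
    ∃ m, HasPathOn G (m + 1) ∧ ¬ HasPathOn G (m + 2) := by
  by_contra! hext
  have hall : ∀ n, HasPathOn G (n + 1) := fun n => by
    induction n with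
    | zero => exact one
    | succ n ih => exact hext n ih
  have := (hall (Fintype.card V)).le_card
  omega

lemma of_cons {m : ℕ} {f : Fin (m + 1) → V} (hf : Function.Injective f)
    (hadj : ∀ (i : ℕ) (h : i + 1 < m + 1), G.Adj (f ⟨i, Nat.lt_of_succ_lt h⟩) (f ⟨i + 1, h⟩))
    {w : V} (hw : w ∉ Set.range f) (hwf : G.Adj w (f 0)) : HasPathOn G (m + 2) := by
  refine ⟨Fin.cons w f, Fin.cons_injective_iff.mpr ⟨hw, hf⟩, fun i h => ?_⟩
  cases i with
  | zero => exact hwf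
  | succ i => exact hadj i (by omega)

end HasPathOn

lemma card_filter_odd_fin_le (n : ℕ) : #{i : Fin n | Odd (i : ℕ)} ≤ n / 2 := by
  calc #{i : Fin n | Odd (i : ℕ)} ≤ #(range (n / 2)) := by
        refine card_le_card_of_injOn (fun i => (i : ℕ) / 2) (fun i hi => ?_)
          (fun i hi j hj hij => ?_)
        · simp only [coe_filter, Set.mem_ofPred_eq, Nat.odd_iff] at hi
          simp only [coe_range, Set.mem_Iio]
          omega
        · simp only [coe_filter, Set.mem_ofPred_eq, Nat.odd_iff] at hi hj
          exact Fin.ext (by simp only at hij; omega)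
    _ = n / 2 := card_range _

section Bipartite

variable {V : Type*} {G : SimpleGraph V} {c : V → Bool} (hc : ∀ u v, G.Adj u v → c u ≠ c v)
include hc

lemma color_path_iff_even {m : ℕ} {f : Fin (m + 1) → V}
    (hadj : ∀ (i : ℕ) (h : i + 1 < m + 1), G.Adj (f ⟨i, Nat.lt_of_succ_lt h⟩) (f ⟨i + 1, h⟩))
    (i : ℕ) (hi : i < m + 1) : c (f ⟨i, hi⟩) = c (f 0) ↔ Even i := by
  induction i with
  | zero => simp
  | succ i ih =>
    have hstep := hc _ _ (hadj i hi)
    rw [Nat.even_add_one, ← ih (by omega)]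
    revert hstep
    cases c (f ⟨i, _⟩) <;> cases c (f ⟨i + 1, hi⟩) <;> cases c (f 0) <;> simp

lemma degree_le_of_not_hasPathOn [Fintype V] [DecidableRel G.Adj] {m : ℕ}
    {f : Fin (m + 1) → V} (hf : Function.Injective f)
    (hadj : ∀ (i : ℕ) (h : i + 1 < m + 1), G.Adj (f ⟨i, Nat.lt_of_succ_lt h⟩) (f ⟨i + 1, h⟩))
    (hmax : ¬ HasPathOn G (m + 2)) : G.degree (f 0) ≤ (m + 1) / 2 := by
  classical
  have hsub : G.neighborFinset (f 0) ⊆ image f {i | Odd (i : ℕ)} := by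
    intro w hw
    rw [SimpleGraph.mem_neighborFinset] at hw
    obtain ⟨i, rfl⟩ : w ∈ Set.range f := by
      by_contra hw'
      exact hmax (HasPathOn.of_cons hf hadj hw' hw.symm)
    refine mem_image_of_mem f (mem_filter.mpr ⟨mem_univ _, ?_⟩)
    rw [← Nat.not_even_iff_odd, ← color_path_iff_even hc hadj]
    exact (hc _ _ hw).symm
  calc G.degree (f 0) = #(G.neighborFinset (f 0)) := (G.card_neighborFinset_eq_degree _).symm
    _ ≤ #{i : Fin (m + 1) | Odd (i : ℕ)} := (card_le_card hsub).trans card_image_le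
    _ ≤ (m + 1) / 2 := card_filter_odd_fin_le _

end Bipartite

theorem stmt0_general {V : Type*} [Fintype V] (G : SimpleGraph V)
    [DecidableRel G.Adj] (k : ℕ) (c : V → Bool)
    (hbip : ∀ u v, G.Adj u v → c u ≠ c v)
    (hA : k ≤ (Finset.univ.filter fun v => c v = true).card)
    (hnopath : ¬ HasPathOn G (2 * k)) :
    ∃ v : V, G.degree v ≤ k - 1 := by
  have hk : 0 < k := Nat.pos_of_ne_zero fun hk => hnopath (hk ▸ HasPathOn.zero)
  have : Nonempty V := by
    obtain ⟨v, -⟩ := Finset.card_pos.mp (hk.trans_le hA)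
    exact ⟨v⟩
  obtain ⟨m, ⟨f, hf, hadj⟩, hmax⟩ := HasPathOn.exists_maximal (G := G)
  have hm : m + 1 < 2 * k := by
    by_contra! h
    exact hnopath (HasPathOn.mono ⟨f, hf, hadj⟩ h)
  exact ⟨f 0, (degree_le_of_not_hasPathOn hbip hf hadj hmax).trans (by omega)⟩

/-- A connected bipartite graph with both parts of size at least `k ≥ 3` and
no path on `2k` vertices has a vertex of degree at most `k - 1`. -/
theorem stmt0 {V : Type*} [Fintype V] [DecidableEq V] (G : SimpleGraph V)
    [DecidableRel G.Adj] (k : ℕ) (hk : 3 ≤ k) (c : V → Bool)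
    (hbip : ∀ u v, G.Adj u v → c u ≠ c v)
    (hA : k ≤ (Finset.univ.filter fun v => c v = true).card)
    (hB : k ≤ (Finset.univ.filter fun v => c v = false).card)
    (hnopath : ¬ HasPathOn G (2 * k))
    (hconn : G.Connected) :
    ∃ v : V, G.degree v ≤ k - 1 :=
  stmt0_general G k c hbip hA hnopath
end

section
/- Let k ≥ 3 and let C be a connected bipartite graph containing no path on 2k vertices. If the minimum degree of C equals k−1, then one of the two parts of the bipartition of C has exactly k−1 vertices. -/
/-!
Take a longest path `L` of `C`, starting at `u`, with `l` vertices. Every neighbour of `u` lies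
on `L`, at an odd position since `C` is bipartite, so `k - 1 ≤ δ(C) ≤ ⌊l/2⌋`; as `l < 2k`, this
forces `⌊l/2⌋ = k - 1`, and `u` is adjacent to every vertex of `L` of the other colour.
Pósa rotations (reverse the segment of `L` from `u` to a vertex `q`, then continue along `L`,
possibly skipping one vertex) show that a vertex off `L` is adjacent only to vertices of `L` of
the other colour, and has no neighbour off `L`. By connectedness every vertex off `L` thus has
the colour of `u`, and the other colour class consists of the `⌊l/2⌋ = k - 1` vertices at odd
positions of `L`.
-/

section

variable {V : Type*} {G : SimpleGraph V}

theorem Bool.eq_of_ne_of_ne {a b d : Bool} (hab : a ≠ b) (hbd : b ≠ d) : a = d := by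
  cases a <;> cases b <;> cases d <;> simp_all

theorem List.countP_ne_head_of_isChain (c : V → Bool) :
    ∀ {u : V} {t : List V}, (u :: t).IsChain (fun x y => c x ≠ c y) →
      (u :: t).countP (fun x => c x != c u) = (t.length + 1) / 2
  | _, [], _ => by simp
  | u, y :: t, h => by
    obtain ⟨huy, ht⟩ := List.isChain_cons_cons.mp h
    have hy : c y = !c u := Bool.eq_not_of_ne huy.symm
    have ih := List.countP_ne_head_of_isChain c ht
    have hsplit := (y :: t).length_eq_countP_add_countP (fun x => c x != c y)
    have hswap : ((y :: t).countP fun x => c x != c u) =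
        (y :: t).countP fun x => decide ¬(c x != c y) = true := by
      congr 1; funext x; rw [hy]; cases c x <;> cases c u <;> rfl
    simp only [List.length_cons] at hsplit ⊢
    rw [List.countP_cons_of_neg (by simp), hswap]
    omega

theorem SimpleGraph.Preconnected.induction_on (hG : G.Preconnected) {P : V → Prop} {u : V}
    (hu : P u) (hstep : ∀ x y, G.Adj x y → P x → P y) (v : V) : P v := by
  induction (G.reachable_iff_reflTransGen u v).mp (hG u v) with
  | refl => exact hu
  | tail _ hxy ih => exact hstep _ _ hxy ih

def IsPathList (G : SimpleGraph V) (L : List V) : Prop :=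
  L.Nodup ∧ L.IsChain G.Adj

namespace IsPathList

theorem hasPathOn {L : List V} (h : IsPathList G L) {m : ℕ} (hm : m ≤ L.length) :
    HasPathOn G m :=
  ⟨fun i => L[i.1], fun _ _ hij => Fin.ext (h.1.getElem_inj_iff.mp hij),
    fun i hi => List.isChain_iff_getElem.mp h.2 i (by omega)⟩

theorem append {l₁ l₂ : List V} (h₁ : IsPathList G l₁) (h₂ : IsPathList G l₂)
    (hd : l₁.Disjoint l₂) (hadj : ∀ x ∈ l₁.getLast?, ∀ y ∈ l₂.head?, G.Adj x y) :
    IsPathList G (l₁ ++ l₂) :=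
  ⟨List.nodup_append'.mpr ⟨h₁.1, h₂.1, hd⟩, List.isChain_append.mpr ⟨h₁.2, h₂.2, hadj⟩⟩

theorem left {l₁ l₂ : List V} (h : IsPathList G (l₁ ++ l₂)) : IsPathList G l₁ :=
  ⟨(List.nodup_append'.mp h.1).1, (List.isChain_append.mp h.2).1⟩

theorem right {l₁ l₂ : List V} (h : IsPathList G (l₁ ++ l₂)) : IsPathList G l₂ :=
  ⟨(List.nodup_append'.mp h.1).2.1, (List.isChain_append.mp h.2).2.1⟩

theorem tail {L : List V} (h : IsPathList G L) : IsPathList G L.tail :=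
  ⟨h.1.tail, h.2.tail⟩

theorem reverse {L : List V} (h : IsPathList G L) : IsPathList G L.reverse :=
  ⟨List.nodup_reverse.mpr h.1, List.isChain_reverse.mpr (h.2.imp fun _ _ hab => hab.symm)⟩

theorem reverse_append {A B T : List V} (h : IsPathList G (A ++ B)) (hT : IsPathList G T)
    (hTB : T ⊆ B) (hadj : ∀ x ∈ A.head?, ∀ y ∈ T.head?, G.Adj x y) :
    IsPathList G (A.reverse ++ T) := by
  refine h.left.reverse.append hT (fun x hxA hxT => ?_) (by simpa using hadj)
  exact (List.nodup_append'.mp h.1).2.2 (List.mem_reverse.mp hxA) (hTB hxT)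

end IsPathList

def IsLongestPathList (G : SimpleGraph V) (L : List V) : Prop :=
  IsPathList G L ∧ ∀ M, IsPathList G M → M.length ≤ L.length

theorem exists_isLongestPathList [Fintype V] [Nonempty V] (G : SimpleGraph V) :
    ∃ L, IsLongestPathList G L ∧ L ≠ [] := by
  classical
  let P m := ∃ L, IsPathList G L ∧ L.length = m
  have hbound : ∀ m, P m → m ≤ Fintype.card V := fun m ⟨L, hL, hm⟩ => hm ▸ hL.1.length_le_card
  have hP1 : P 1 :=
    ⟨[Classical.arbitrary V], ⟨List.nodup_singleton _, List.isChain_singleton _⟩, rfl⟩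
  have hpos := Nat.le_findGreatest (hbound 1 hP1) hP1
  obtain ⟨L, hL, hlen⟩ := Nat.findGreatest_spec (hbound 1 hP1) hP1
  refine ⟨L, ⟨hL, fun M hM => hlen ▸ Nat.le_findGreatest (hbound _ ⟨M, hM, rfl⟩) ⟨M, hM, rfl⟩⟩, ?_⟩
  rintro rfl
  simp only [List.length_nil] at hlen
  omega

namespace IsLongestPathList

variable {c : V → Bool} {L : List V} {u : V}

theorem mem_of_adj (h : IsLongestPathList G L) {w : V} (hu : u ∈ L.head?)
    (huw : G.Adj u w) : w ∈ L := by
  by_contra hw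
  have hpath : IsPathList G ([w] ++ L) :=
    IsPathList.append ⟨List.nodup_singleton w, List.isChain_singleton w⟩ h.1
      (List.singleton_disjoint.mpr hw)
      (by simpa using fun y hy => Option.mem_unique hu hy ▸ huw.symm)
  simpa using h.2 _ hpath

/-- Pósa rotation: `pre ++ (s ++ [q]).reverse ++ T` is again a path. -/
theorem length_add_le {s t pre T : List V} {q : V} (h : IsLongestPathList G (s ++ q :: t))
    (hpre : IsPathList G pre) (hdisj : pre.Disjoint (s ++ q :: t))
    (hpq : ∀ x ∈ pre.getLast?, G.Adj x q) (hT : IsPathList G T) (hTt : T ⊆ t)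
    (hadj : ∀ x ∈ (s ++ q :: t).head?, ∀ y ∈ T.head?, G.Adj x y) :
    pre.length + T.length ≤ t.length := by
  have hrot : IsPathList G ((s ++ [q]).reverse ++ T) :=
    IsPathList.reverse_append (B := t) (by simpa using h.1) hT hTt
      (by cases s <;> simpa using hadj)
  have hsub : (s ++ [q]).reverse ++ T ⊆ s ++ q :: t := by
    intro x hx
    simp only [List.mem_append, List.mem_reverse, List.mem_cons] at hx ⊢
    grind
  have := h.2 _ (hpre.append hrot (fun x hx hx' => hdisj hx (hsub hx')) (by simpa using hpq))
  simp at this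
  omega

theorem color_ne_of_adj_of_not_mem (hbip : ∀ x y, G.Adj x y → c x ≠ c y)
    (h : IsLongestPathList G L) (hu : u ∈ L.head?) (hhub : ∀ x ∈ L, c x ≠ c u → G.Adj u x)
    {p q : V} (hp : p ∉ L) (hq : q ∈ L) (hpq : G.Adj p q) : c q ≠ c u := by
  intro hqu
  obtain ⟨s, t, rfl⟩ := List.append_of_mem hq
  have := h.length_add_le (pre := [p]) (T := t) ⟨List.nodup_singleton p, List.isChain_singleton p⟩
    (List.singleton_disjoint.mpr hp) (by simpa using hpq) h.1.right.tail (List.Subset.refl t) ?_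
  · simp at this
  intro x hx y hy
  obtain rfl := Option.mem_unique hx hu
  have hqy : G.Adj q y := (List.isChain_cons.mp h.1.right.2).1 y hy
  refine hhub y ?_ (hqu ▸ (hbip q y hqy).symm)
  obtain ⟨t', rfl⟩ := List.head?_eq_some_iff.mp hy
  simp

theorem not_adj_of_not_mem (hbip : ∀ x y, G.Adj x y → c x ≠ c y)
    (h : IsLongestPathList G L) (hu : u ∈ L.head?) (hhub : ∀ x ∈ L, c x ≠ c u → G.Adj u x)
    {r p q : V} (hr : r ∉ L) (hp : p ∉ L) (hq : q ∈ L) (hrp : G.Adj r p) (hpq : G.Adj p q) :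
    False := by
  have hqu := h.color_ne_of_adj_of_not_mem hbip hu hhub hp hq hpq
  obtain ⟨s, t, rfl⟩ := List.append_of_mem hq
  have hpre : IsPathList G [r, p] := ⟨by simp [hrp.ne], List.isChain_pair.mpr hrp⟩
  have := h.length_add_le (pre := [r, p]) (T := t.tail) hpre
    (fun x hx hxL => by rcases List.mem_pair.mp hx with rfl | rfl <;> contradiction)
    (by simpa using hpq) h.1.right.tail.tail (List.tail_subset t) ?_
  · simp at this
    omega
  intro x hx z hz
  obtain rfl := Option.mem_unique hx hu
  obtain _ | ⟨y, t'⟩ := t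
  · simp at hz
  obtain ⟨t'', rfl⟩ := List.head?_eq_some_iff.mp hz
  obtain ⟨hqy, hyz, -⟩ : G.Adj q y ∧ G.Adj y z ∧ _ := by
    simpa only [List.isChain_cons_cons] using h.1.right.2
  have hzq : c z = c q := (Bool.eq_of_ne_of_ne (hbip q y hqy) (hbip y z hyz)).symm
  exact hhub z (by simp) (hzq ▸ hqu)

theorem mem_of_color_ne (hbip : ∀ x y, G.Adj x y → c x ≠ c y) (hG : G.Preconnected)
    (h : IsLongestPathList G L) (hu : u ∈ L.head?) (hhub : ∀ x ∈ L, c x ≠ c u → G.Adj u x)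
    {v : V} (hv : c v ≠ c u) : v ∈ L := by
  have hnear : ∀ x, x ∈ L ∨ ∃ q ∈ L, G.Adj x q := by
    refine hG.induction_on (Or.inl (List.mem_of_mem_head? hu)) fun x y hxy hx => ?_
    by_cases hy : y ∈ L
    · exact Or.inl hy
    by_cases hxL : x ∈ L
    · exact Or.inr ⟨x, hxL, hxy.symm⟩
    obtain ⟨q, hq, hxq⟩ := hx.resolve_left hxL
    exact (h.not_adj_of_not_mem hbip hu hhub hy hxL hq hxy.symm hxq).elim
  by_contra hvL
  obtain ⟨q, hq, hvq⟩ := (hnear v).resolve_left hvL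
  exact hv (Bool.eq_of_ne_of_ne (hbip v q hvq)
    (h.color_ne_of_adj_of_not_mem hbip hu hhub hvL hq hvq))

theorem _root_.IsPathList.card_toFinset_filter_color_ne [DecidableEq V]
    (hbip : ∀ x y, G.Adj x y → c x ≠ c y) {t : List V} (h : IsPathList G (u :: t)) :
    ((u :: t).toFinset.filter fun x => c x ≠ c u).card = (t.length + 1) / 2 := by
  have hfilter : ((u :: t).toFinset.filter fun x => c x ≠ c u) =
      ((u :: t).filter fun x => c x != c u).toFinset := by
    ext x
    simp only [Finset.mem_filter, List.mem_toFinset, List.mem_filter, bne_iff_ne]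
  rw [hfilter, List.toFinset_card_of_nodup (h.1.filter _), ← List.countP_eq_length_filter]
  exact List.countP_ne_head_of_isChain c (h.2.imp hbip)

theorem neighborFinset_subset_filter_color_ne [DecidableEq V] [Fintype (G.neighborSet u)]
    (hbip : ∀ x y, G.Adj x y → c x ≠ c y) {t : List V} (h : IsLongestPathList G (u :: t)) :
    G.neighborFinset u ⊆ (u :: t).toFinset.filter fun x => c x ≠ c u := fun w hw => by
  rw [SimpleGraph.mem_neighborFinset] at hw
  exact Finset.mem_filter.mpr ⟨List.mem_toFinset.mpr (h.mem_of_adj rfl hw), (hbip u w hw).symm⟩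

theorem degree_le [Fintype (G.neighborSet u)] (hbip : ∀ x y, G.Adj x y → c x ≠ c y)
    {t : List V} (h : IsLongestPathList G (u :: t)) : G.degree u ≤ (t.length + 1) / 2 := by
  classical
  rw [← SimpleGraph.card_neighborFinset_eq_degree, ← h.1.card_toFinset_filter_color_ne hbip]
  exact Finset.card_le_card (h.neighborFinset_subset_filter_color_ne hbip)

theorem card_filter_color_ne [Fintype V] [DecidableRel G.Adj]
    (hbip : ∀ x y, G.Adj x y → c x ≠ c y) (hG : G.Preconnected) {t : List V}
    (h : IsLongestPathList G (u :: t)) (hdeg : (t.length + 1) / 2 ≤ G.degree u) :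
    (Finset.univ.filter fun v => c v ≠ c u).card = (t.length + 1) / 2 := by
  classical
  have hN := h.neighborFinset_subset_filter_color_ne hbip
  have hN_eq := Finset.eq_of_subset_of_card_le hN (by
    rw [h.1.card_toFinset_filter_color_ne hbip, SimpleGraph.card_neighborFinset_eq_degree]
    exact hdeg)
  have hhub : ∀ x ∈ u :: t, c x ≠ c u → G.Adj u x := fun x hx hxu => by
    rw [← SimpleGraph.mem_neighborFinset, hN_eq]
    exact Finset.mem_filter.mpr ⟨List.mem_toFinset.mpr hx, hxu⟩
  rw [← h.1.card_toFinset_filter_color_ne hbip]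
  congr 1
  ext v
  simpa using fun hv => h.mem_of_color_ne hbip hG rfl hhub hv

end IsLongestPathList

end

theorem stmt1_general {V : Type*} [Fintype V]
    (C : SimpleGraph V) [DecidableRel C.Adj] (k : ℕ) (c : V → Bool)
    (hbip : ∀ u v, C.Adj u v → c u ≠ c v)
    (hconn : C.Connected)
    (hnopath : ¬ HasPathOn C (2 * k))
    (hmin : C.minDegree = k - 1) :
    (Finset.univ.filter fun v => c v = true).card = k - 1 ∨
    (Finset.univ.filter fun v => c v = false).card = k - 1 := by
  have := hconn.nonempty
  obtain ⟨L, hL, hne⟩ := exists_isLongestPathList C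
  obtain ⟨u, t, rfl⟩ := List.exists_cons_of_ne_nil hne
  have hlen : t.length + 1 < 2 * k := lt_of_not_ge fun h => hnopath (hL.1.hasPathOn h)
  have hdeg : k - 1 ≤ C.degree u := hmin ▸ C.minDegree_le_degree u
  have hhalf : (t.length + 1) / 2 = k - 1 := by
    have := hL.degree_le hbip
    omega
  have hcard := hL.card_filter_color_ne hbip hconn.preconnected (hhalf ▸ hdeg)
  rw [hhalf] at hcard
  cases hcu : c u
  · left; simpa [hcu] using hcard
  · right; simpa [hcu] using hcard

/-- If `C` is a connected bipartite graph with no path on `2k` vertices (`k ≥ 3`)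
and minimum degree exactly `k - 1`, then one of its bipartition classes has
exactly `k - 1` vertices. -/
theorem stmt1 {V : Type*} [Fintype V] [DecidableEq V] [Nonempty V]
    (C : SimpleGraph V) [DecidableRel C.Adj] (k : ℕ) (hk : 3 ≤ k) (c : V → Bool)
    (hbip : ∀ u v, C.Adj u v → c u ≠ c v)
    (hconn : C.Connected)
    (hnopath : ¬ HasPathOn C (2 * k))
    (hmin : C.minDegree = k - 1) :
    (Finset.univ.filter fun v => c v = true).card = k - 1 ∨
    (Finset.univ.filter fun v => c v = false).card = k - 1 :=
  stmt1_general C k c hbip hconn hnopath hmin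
end

section
/- Let n be a positive real, F' a nonempty finite family, and for each C in F' let a(C) be a nonnegative real with Σ_{C∈F'} a(C) = A. If Σ_{C∈F'} a(C)(a(C)−1)/2 ≤ n², then |F'| ≥ A²/(2n² + A). -/
/-- Convexity step: if `a : F' → ℝ≥0` sums to `A` over the nonempty finite family `F'`
and `∑ a(C)(a(C)−1)/2 ≤ n²`, then `|F'| ≥ A²/(2n² + A)`. -/
theorem stmt6 {α : Type*} (F' : Finset α) (hF : F'.Nonempty) (n A : ℝ) (hn : 0 < n)
    (a : α → ℝ) (ha : ∀ C ∈ F', 0 ≤ a C) (hA : ∑ C ∈ F', a C = A)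
    (hsum : ∑ C ∈ F', a C * (a C - 1) / 2 ≤ n ^ 2) :
    A ^ 2 / (2 * n ^ 2 + A) ≤ (F'.card : ℝ) := by
  have hm : (0:ℝ) < F'.card := by exact_mod_cast Finset.card_pos.mpr hF
  have hA0 : 0 ≤ A := hA ▸ Finset.sum_nonneg ha
  have hcs : A ^ 2 ≤ (F'.card : ℝ) * ∑ C ∈ F', a C ^ 2 := by
    rw [← hA]; exact sq_sum_le_card_mul_sum_sq
  have hsq : ∑ C ∈ F', a C ^ 2 ≤ 2 * n ^ 2 + A := by
    have : ∑ C ∈ F', a C * (a C - 1) / 2 = ((∑ C ∈ F', a C ^ 2) - A) / 2 := by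
      rw [← hA, ← Finset.sum_sub_distrib, ← Finset.sum_div]
      congr 1; apply Finset.sum_congr rfl; intros; ring
    linarith [hsum, this ▸ hsum]
  have hpos : 0 < 2 * n ^ 2 + A := by positivity
  rw [div_le_iff₀ hpos]
  calc A ^ 2 ≤ (F'.card : ℝ) * ∑ C ∈ F', a C ^ 2 := hcs
    _ ≤ (F'.card : ℝ) * (2 * n ^ 2 + A) := by
        exact mul_le_mul_of_nonneg_left hsq (le_of_lt hm)
end

section
/- Let n, g > 0 and k ≥ 2 be reals, F a finite family, and for each j in F let b_j ≥ k be a real. Set B = Σ_j b_j. Assume: (i) n² = (k−1)B, (ii) 2ng ≥ (k−1)|F| + B, and (iii) n² ≥ (1/2)·B·(B/|F| − 1) with F nonempty. Then g ≥ (3k−2)/(2(k−1)(2k−1)) · n. -/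
/-- Conditional tightness: if `b j ≥ k` for all `j` in the nonempty finite family `F`,
`B = ∑ b j`, and (i) `n² = (k−1)B`, (ii) `2ng ≥ (k−1)|F| + B`,
(iii) `n² ≥ (1/2)·B·(B/|F| − 1)`, then `g ≥ (3k−2)/(2(k−1)(2k−1))·n`. -/
theorem stmt13 {α : Type*} (F : Finset α) (hF : F.Nonempty) (n g k : ℝ)
    (hn : 0 < n) (hg : 0 < g) (hk : 2 ≤ k) (b : α → ℝ) (hb : ∀ j ∈ F, k ≤ b j)
    (hi : n ^ 2 = (k - 1) * ∑ j ∈ F, b j)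
    (hii : (k - 1) * (F.card : ℝ) + ∑ j ∈ F, b j ≤ 2 * n * g)
    (hiii : (1 / 2) * (∑ j ∈ F, b j) * ((∑ j ∈ F, b j) / (F.card : ℝ) - 1) ≤ n ^ 2) :
    (3 * k - 2) / (2 * (k - 1) * (2 * k - 1)) * n ≤ g := by
  set B := ∑ j ∈ F, b j with hBdef
  set m : ℝ := (F.card : ℝ) with hmdef
  have hm : 0 < m := by
    have : 0 < F.card := Finset.card_pos.mpr hF
    rw [hmdef]; exact_mod_cast this
  have hB : 0 < B := by
    have : k * m ≤ B := by
      have := Finset.card_nsmul_le_sum F b k hb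
      simpa [nsmul_eq_mul, mul_comm] using this
    nlinarith
  -- from (iii): B/m - 1 ≤ 2(k-1), hence B ≤ (2k-1) m
  have hdiv : B / m - 1 ≤ 2 * (k - 1) := by
    by_contra h
    push_neg at h
    have : n ^ 2 < (1 / 2) * B * (B / m - 1) := by
      rw [hi]
      nlinarith
    linarith
  have hBm : B ≤ (2 * k - 1) * m := by
    have := (div_le_iff₀ hm).mp (by linarith : B / m ≤ 2 * k - 1)
    linarith [this]
  -- goal multiplied out
  rw [div_mul_eq_mul_div, div_le_iff₀ (by nlinarith : (0:ℝ) < 2 * (k - 1) * (2 * k - 1))]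
  nlinarith [mul_le_mul_of_nonneg_left hii (by nlinarith : (0:ℝ) ≤ (k-1)*(2*k-1)),
    mul_le_mul_of_nonneg_left hBm (by nlinarith : (0:ℝ) ≤ (k-1)*(k-1)), hi, hB, hn.le]
end

section
/- Let P = (v₁, …, v_{2k−1}) be a path on 2k−1 vertices in a bipartite graph G with v₁, v₃, …, v_{2k−1} on side A. Suppose N(v₁) = N(v_{2k−1}) = {v₂, v₄, …, v_{2k−2}}, and suppose G contains an edge from some v_{2i−1} with 2 ≤ i ≤ k−1 to a vertex w on side B not on P. Then G contains a path on 2k vertices. -/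
/-- Rotation argument.  Let `v 0, v 1, …, v (2k−2)` be a path on `2k−1` vertices in a
bipartite graph `G` (0-indexed: `v j` corresponds to `v_{j+1}` of the paper), with the
even-indexed vertices on side `A` (where `c = true`).  Suppose the neighbourhoods of
both endpoints are exactly the odd-indexed path vertices `{v 1, v 3, …, v (2k−3)}`,
and there is an edge from some `v (2i−2)` with `2 ≤ i ≤ k−1` to a vertex `w` on side
`B` not on the path.  Then `G` contains a path on `2k` vertices. -/
theorem stmt18 {V : Type*} (G : SimpleGraph V) (k : ℕ) (hk : 3 ≤ k)
    (c : V → Bool) (hbip : ∀ u w, G.Adj u w → c u ≠ c w)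
    (v : Fin (2 * k - 1) → V) (hinj : Function.Injective v)
    (hpath : ∀ (i : ℕ) (h : i + 1 < 2 * k - 1),
      G.Adj (v ⟨i, Nat.lt_of_succ_lt h⟩) (v ⟨i + 1, h⟩))
    (hside : ∀ i : Fin (2 * k - 1), i.val % 2 = 0 → c (v i) = true)
    (hN1 : ∀ u : V, G.Adj (v ⟨0, by omega⟩) u ↔
      ∃ j : Fin (2 * k - 1), j.val % 2 = 1 ∧ u = v j)
    (hN2 : ∀ u : V, G.Adj (v ⟨2 * k - 2, by omega⟩) u ↔
      ∃ j : Fin (2 * k - 1), j.val % 2 = 1 ∧ u = v j)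
    (hedge : ∃ i : ℕ, ∃ hi : 2 ≤ i ∧ i ≤ k - 1, ∃ w : V,
      c w = false ∧ (∀ j : Fin (2 * k - 1), w ≠ v j) ∧
      G.Adj (v ⟨2 * i - 2, by omega⟩) w) :
    HasPathOn G (2 * k) := by

  obtain ⟨i, ⟨hi2, hik⟩, w, hcw, hwv, hadj⟩ := hedge
  have veq : ∀ (a b : ℕ) (ha : a < 2*k-1) (hb : b < 2*k-1), a = b → v ⟨a, ha⟩ = v ⟨b, hb⟩ := by
    rintro a b ha hb rfl; rfl
  refine ⟨fun j => if j.val = 0 then w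
      else if j.val ≤ 2*i-1 then v ⟨2*i-1-j.val, by omega⟩ else v ⟨j.val-1, by omega⟩,
    ?_, ?_⟩
  · intro a b hab
    have ha' := a.isLt
    have hb' := b.isLt
    by_cases ha0 : a.val = 0 <;> by_cases hb0 : b.val = 0 <;>
      by_cases ha1 : a.val ≤ 2*i-1 <;> by_cases hb1 : b.val ≤ 2*i-1 <;>
      simp only [ha0, hb0, ha1, hb1, if_pos, if_neg, if_true, if_false, reduceIte] at hab <;>
      first
        | (apply Fin.ext; omega)
        | exact absurd hab (hwv _)
        | exact absurd hab.symm (hwv _)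
        | (have h := hinj hab; rw [Fin.mk.injEq] at h; apply Fin.ext; omega)
  · intro j hj
    dsimp only
    rcases Nat.lt_trichotomy j (2*i-1) with h | h | h
    · -- j ≤ 2i-2
      rcases Nat.eq_zero_or_pos j with rfl | hj0
      · rw [if_pos rfl, if_neg (by omega : ¬ (0+1 = 0)), if_pos (by omega : 0+1 ≤ 2*i-1)]
        rw [veq (2*i-1-(0+1)) (2*i-2) (by omega) (by omega) (by omega)]
        exact hadj.symm
      · rw [if_neg (by omega : ¬ j = 0), if_pos (by omega : j ≤ 2*i-1),
          if_neg (by omega : ¬ (j+1 = 0)), if_pos (by omega : j+1 ≤ 2*i-1)]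
        have hp := hpath (2*i-1-(j+1)) (by omega)
        rw [veq (2*i-1-(j+1)) (2*i-1-(j+1)) (by omega) (by omega) rfl] at hp
        rw [veq (2*i-1-(j+1)+1) (2*i-1-j) (by omega) (by omega) (by omega)] at hp
        exact hp.symm
    · -- j = 2i-1 : rotation edge
      subst h
      rw [if_neg (by omega : ¬ 2*i-1 = 0), if_pos (le_refl _),
        if_neg (by omega : ¬ (2*i-1+1 = 0)), if_neg (by omega : ¬ (2*i-1+1 ≤ 2*i-1))]
      rw [veq (2*i-1-(2*i-1)) 0 (by omega) (by omega) (by omega)]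
      exact (hN1 _).mpr ⟨⟨2*i-1+1-1, by omega⟩, by simp; omega, rfl⟩
    · -- j ≥ 2i
      rw [if_neg (by omega : ¬ j = 0), if_neg (by omega : ¬ j ≤ 2*i-1),
        if_neg (by omega : ¬ (j+1 = 0)), if_neg (by omega : ¬ (j+1 ≤ 2*i-1))]
      have hp := hpath (j-1) (by omega)
      rw [veq (j-1+1) (j+1-1) (by omega) (by omega) (by omega)] at hp
      exact hp
end
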